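/- arXiv:2002.09353 — 4 statements merged into one kernel-verified Lean document; each statement's English description precedes it below -/
import Mathlib

section
/- For every integer N ≥ 2, the polynomial Q_N(x) = Σ_{n=0}^{N} (N!/n!) x^n has no rational root. -/
/-!
A rational root of the monic integer polynomial `Q_N` is an integer `m`. If `m = 1`, every term
of `Q_N(1)` is positive; `Q_N(-1) = ∑ (-1)ⁿ N!/n!` is the number of derangements of `N`
letters, positive for `N ≥ 2`. Otherwise some prime `p` divides `m`, and then every term of
`Q_N(m)` except the constant `N!` is divisible by `p ^ (v_p(N!) + 1)` because `v_p(n!) < n`;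
`N!` is not, so `Q_N(m) ≠ 0`.
-/

open Polynomial

/-- `Qpoly N` is `N!` times the truncated exponential series,
`Q_N(x) = ∑_{n=0}^{N} (N!/n!) xⁿ`, a monic integer polynomial of degree `N`. -/
noncomputable def Qpoly (N : ℕ) : Polynomial ℤ :=
  ∑ n ∈ Finset.range (N + 1), C ((N.factorial / n.factorial : ℕ) : ℤ) * X ^ n

theorem Qpoly_monic (N : ℕ) : (Qpoly N).Monic := by
  rw [Qpoly, Finset.sum_range_succ, Nat.div_self N.factorial_pos, Nat.cast_one, C_1, one_mul,
    add_comm]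
  exact monic_X_pow_add (by simp_rw [← Fin.sum_univ_eq_sum_range, degree_sum_fin_lt])

theorem eval_Qpoly (N : ℕ) (m : ℤ) :
    (Qpoly N).eval m =
      ∑ n ∈ Finset.range (N + 1), ((N.factorial / n.factorial : ℕ) : ℤ) * m ^ n := by
  simp [Qpoly, eval_finsetSum]

theorem eval_one_Qpoly_pos (N : ℕ) : 0 < (Qpoly N).eval 1 := by
  rw [eval_Qpoly]
  refine Finset.sum_pos (fun n hn => ?_) Finset.nonempty_range_add_one
  have hnN : n ≤ N := Finset.mem_range_succ_iff.mp hn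
  rw [one_pow, mul_one]
  exact_mod_cast Nat.div_pos (Nat.factorial_le hnN) n.factorial_pos

theorem eval_neg_one_Qpoly (N : ℕ) : (Qpoly N).eval (-1) = numDerangements N := by
  rw [eval_Qpoly, numDerangements_sum]
  refine Finset.sum_congr rfl fun n hn => ?_
  rw [Nat.ascFactorial_eq_div, Nat.add_sub_cancel' (Finset.mem_range_succ_iff.mp hn), mul_comm]

theorem numDerangements_pos {N : ℕ} (hN : 2 ≤ N) : 0 < numDerangements N := by
  induction N, hN using Nat.le_induction with
  | base => decide
  | succ N hN ih =>
    obtain ⟨n, rfl⟩ := Nat.exists_eq_add_of_le' (by omega : 1 ≤ N)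
    rw [numDerangements_add_two]
    positivity

theorem pow_padicValNat_factorial_succ_dvd {p N n : ℕ} [Fact p.Prime] (hn : n ≠ 0)
    (hnN : n ≤ N) : p ^ (padicValNat p N.factorial + 1) ∣ N.factorial / n.factorial * p ^ n := by
  have hdvd : n.factorial ∣ N.factorial := Nat.factorial_dvd_factorial hnN
  have hval : padicValNat p (N.factorial / n.factorial)
      = padicValNat p N.factorial - padicValNat p n.factorial := padicValNat.div_of_dvd hdvd
  have hle : padicValNat p n.factorial ≤ padicValNat p N.factorial :=
    (padicValNat_dvd_iff_le N.factorial_ne_zero).mp (pow_padicValNat_dvd.trans hdvd)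
  have hlt := padicValNat_factorial_lt_of_ne_zero p hn
  calc p ^ (padicValNat p N.factorial + 1)
      ∣ p ^ (padicValNat p (N.factorial / n.factorial) + n) := Nat.pow_dvd_pow p (by omega)
    _ ∣ N.factorial / n.factorial * p ^ n := by
      rw [pow_add]; exact mul_dvd_mul_right pow_padicValNat_dvd _

theorem eval_Qpoly_ne_zero_of_prime_dvd {p : ℕ} (hp : p.Prime) {m : ℤ} (hpm : (p : ℤ) ∣ m)
    (N : ℕ) : (Qpoly N).eval m ≠ 0 := by
  have := Fact.mk hp
  set a := padicValNat p N.factorial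
  have htail : (p : ℤ) ^ (a + 1) ∣
      ∑ n ∈ Finset.range N, ((N.factorial / (n + 1).factorial : ℕ) : ℤ) * m ^ (n + 1) := by
    refine Finset.dvd_sum fun n hn => ?_
    have hnat := pow_padicValNat_factorial_succ_dvd (p := p) n.succ_ne_zero
      (Finset.mem_range.mp hn)
    exact (Int.natCast_dvd_natCast.mpr hnat).trans (by push_cast; gcongr)
  intro h0
  rw [eval_Qpoly, Finset.sum_range_succ', Nat.factorial_zero, Nat.div_one, pow_zero,
    mul_one] at h0
  have hfact : (p : ℤ) ^ (a + 1) ∣ (N.factorial : ℤ) := (dvd_add_right htail).mp (h0 ▸ dvd_zero _)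
  exact pow_succ_padicValNat_not_dvd N.factorial_ne_zero (by exact_mod_cast hfact)

/-- For every integer `N ≥ 2`, the polynomial `Q_N` has no rational root. -/
theorem stmt_0 (N : ℕ) (hN : 2 ≤ N) (q : ℚ) :
    Polynomial.aeval q (Qpoly N) ≠ 0 := by
  intro hq
  obtain ⟨m, rfl, -⟩ := exists_integer_of_is_root_of_monic (Qpoly_monic N) hq
  have hm : (Qpoly N).eval m = 0 := by
    rwa [aeval_algebraMap_apply, coe_aeval_eq_eval, algebraMap_int_eq, eq_intCast,
      Int.cast_eq_zero] at hq
  by_cases hunit : m.natAbs = 1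
  · obtain rfl | rfl : m = 1 ∨ m = -1 := by omega
    · exact (eval_one_Qpoly_pos N).ne' hm
    · rw [eval_neg_one_Qpoly] at hm
      exact (numDerangements_pos hN).ne' (by exact_mod_cast hm)
  · obtain ⟨p, hp, hpm⟩ := Nat.exists_prime_and_dvd hunit
    exact eval_Qpoly_ne_zero_of_prime_dvd hp (Int.natCast_dvd.mpr hpm) N hm
end

section
/- Suppose N ≥ 2 and Q_N = P·Q is a factorization in ℤ[x] into monic polynomials with 1 ≤ deg P ≤ deg Q < p, where p is a prime with N/2 < p < N. Then this is impossible; i.e., Q_N has no such factorization with both factor degrees less than p. -/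
open Polynomial

lemma Qpoly_coeff (N k : ℕ) (hk : k ≤ N) :
    (Qpoly N).coeff k = ((N.factorial / k.factorial : ℕ) : ℤ) := by
  rw [Qpoly, finset_sum_coeff]
  simp only [coeff_C_mul, coeff_X_pow, mul_ite, mul_one, mul_zero]
  rw [Finset.sum_ite_eq (Finset.range (N+1)) k]
  simp [Nat.lt_succ_of_le hk]

lemma Qpoly_natDegree (N : ℕ) : (Qpoly N).natDegree = N := by
  have hle : (Qpoly N).natDegree ≤ N := by
    apply Polynomial.natDegree_sum_le_of_forall_le
    intro n hn
    calc (C ((N.factorial / n.factorial : ℕ) : ℤ) * X ^ n).natDegree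
        ≤ n := natDegree_C_mul_le _ _ |>.trans (natDegree_X_pow _).le
      _ ≤ N := Nat.lt_succ_iff.mp (Finset.mem_range.mp hn)
  have hc : (Qpoly N).coeff N = 1 := by
    rw [Qpoly_coeff N N le_rfl, Nat.div_self N.factorial_pos]; norm_num
  exact le_antisymm hle (le_natDegree_of_ne_zero (by rw [hc]; norm_num))

lemma dvd_coeff (N p k : ℕ) (hp : p.Prime) (hpN : p ≤ N) (hk : k < p) :
    (p : ℤ) ∣ (Qpoly N).coeff k := by
  rw [Qpoly_coeff N k (hk.trans_le hpN).le]
  have h1 : k.factorial ∣ N.factorial := Nat.factorial_dvd_factorial (hk.trans_le hpN).le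
  have h2 : p ∣ N.factorial / k.factorial := by
    rw [Nat.dvd_div_iff_mul_dvd h1]
    refine Nat.Coprime.mul_dvd_of_dvd_of_dvd ?_ h1 (hp.dvd_factorial.mpr hpN)
    exact ((hp.coprime_iff_not_dvd).mpr fun h => absurd (hp.dvd_factorial.mp h) (not_le.mpr hk)).symm
  exact_mod_cast Int.natCast_dvd_natCast.mpr h2

lemma key (N p : ℕ) (hp : p.Prime) (hpN : p ≤ N) (P Q : Polynomial ℤ) (hPm : P.Monic)
    (hfac : Qpoly N = P * Q) (hdP : P.natDegree < p)
    (h0 : (p : ℤ) ∣ P.coeff 0) (hQ0 : ¬ (p : ℤ) ∣ Q.coeff 0) : False := by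
  have hprime : Prime (p : ℤ) := Nat.prime_iff_prime_int.mp hp
  have main : ∀ k, k ≤ P.natDegree → (p : ℤ) ∣ P.coeff k := by
    intro k
    induction k using Nat.strong_induction_on with
    | _ k ih =>
      intro hk
      rcases Nat.eq_zero_or_pos k with rfl | hk0
      · exact h0
      · have hck : (p : ℤ) ∣ (P * Q).coeff k := by
          rw [← hfac]; exact dvd_coeff N p k hp hpN (hk.trans_lt hdP)
        rw [coeff_mul, Finset.Nat.sum_antidiagonal_eq_sum_range_succ
          (fun i j => P.coeff i * Q.coeff j), Finset.sum_range_succ] at hck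
        have hsum : (p : ℤ) ∣ ∑ i ∈ Finset.range k, P.coeff i * Q.coeff (k - i) :=
          Finset.dvd_sum fun i hi =>
            ((ih i (Finset.mem_range.mp hi) ((Finset.mem_range.mp hi).le.trans hk)).mul_right _)
        have : (p : ℤ) ∣ P.coeff k * Q.coeff (k - k) := (dvd_add_right hsum).mp hck
        rw [Nat.sub_self] at this
        exact (hprime.dvd_mul.mp this).resolve_right hQ0
  have := main P.natDegree le_rfl
  rw [hPm.coeff_natDegree] at this
  have h1 := Int.eq_one_of_dvd_one (by positivity) this
  exact hp.one_lt.ne' (by exact_mod_cast h1)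

/-- For `N ≥ 2` and a prime `p` with `N/2 < p < N`, there is no factorization
`Q_N = P * Q` in `ℤ[x]` into monic polynomials with `1 ≤ deg P ≤ deg Q < p`. -/
theorem stmt_4 (N p : ℕ) (hN : 2 ≤ N) (hp : p.Prime) (hp1 : N < 2 * p) (hp2 : p < N)
    (P Q : Polynomial ℤ) (hPm : P.Monic) (hQm : Q.Monic)
    (hfac : Qpoly N = P * Q)
    (hdP : 1 ≤ P.natDegree) (hPQ : P.natDegree ≤ Q.natDegree) (hQp : Q.natDegree < p) :
    False := by
  have hpN : p ≤ N := hp2.le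
  -- coeff 0
  have hc0 : P.coeff 0 * Q.coeff 0 = (N.factorial : ℤ) := by
    have := Qpoly_coeff N 0 (Nat.zero_le N)
    rw [hfac, mul_coeff_zero] at this
    simpa using this
  have hprime : Prime (p : ℤ) := Nat.prime_iff_prime_int.mp hp
  have hpfac : (p : ℤ) ∣ (N.factorial : ℤ) :=
    Int.natCast_dvd_natCast.mpr (hp.dvd_factorial.mpr hpN)
  have hnotsq : ¬ (p : ℤ)^2 ∣ (N.factorial : ℤ) := by
    rw [← Nat.cast_pow, Int.natCast_dvd_natCast]
    rw [Nat.Prime.pow_dvd_factorial_iff hp (b := 2) ?_]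
    · have h1 : N / p = 1 := Nat.div_eq_of_lt_le (by simpa using hpN) (by simpa [two_mul] using hp1)
      simp [Finset.sum_Ico_eq_sum_range, h1]
    · rw [Nat.log_lt_iff_lt_pow hp.one_lt (by omega)]
      calc N < 2 * p := hp1
        _ ≤ p * p := Nat.mul_le_mul_right p hp.two_le
        _ = p ^ 2 := (sq p).symm
  have hdQN : Q.natDegree < N := by
    have hdsum : P.natDegree + Q.natDegree = N := by
      rw [← Qpoly_natDegree N, hfac, hPm.natDegree_mul hQm]
    omega
  have hdPN : P.natDegree < N := lt_of_le_of_lt hPQ hdQN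
  rcases hprime.dvd_mul.mp (hc0 ▸ hpfac) with h | h
  · have hQ0 : ¬ (p : ℤ) ∣ Q.coeff 0 := fun h2 => hnotsq (by
      rw [← hc0, sq]; exact mul_dvd_mul h h2)
    exact key N p hp hpN P Q hPm hfac (lt_of_le_of_lt hPQ hQp) h hQ0
  · have hP0 : ¬ (p : ℤ) ∣ P.coeff 0 := fun h2 => hnotsq (by
      rw [← hc0, sq]; exact mul_dvd_mul h2 h)
    exact key N p hp hpN Q P hQm (by rw [hfac, mul_comm]) hQp h hP0
end

section
/- For a positive integer N, the integer (−1)^{N(N−1)/2 + N} · (N!)^N is the square of a rational number if and only if N is divisible by 4. -/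
/-!
Since `(N!)^N > 0`, the product is a square only if the sign is `+1`, i.e. `N ≡ 0, 3 (mod 4)`,
and `(N!)^N` is itself a square. For `N ≥ 2`, Bertrand's postulate gives a prime `p` with
`p ≤ N < 2p`, so `p` divides `N!` exactly once and `v_p((N!)^N) = N`; hence `N` must be even,
which rules out `N ≡ 3 (mod 4)`.
-/

open Nat

lemma mul_sub_one_div_two_add_self_add_four (M : ℕ) :
    (M + 4) * (M + 4 - 1) / 2 + (M + 4) = M * (M - 1) / 2 + M + 2 * (2 * M + 5) := by
  have key : (M + 4) * (M + 4 - 1) = M * (M - 1) + 2 * (4 * M + 6) := by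
    rcases M with _ | m
    · rfl
    · rw [show m + 1 + 4 - 1 = m + 4 by omega, Nat.add_sub_cancel]; ring
  rw [key, Nat.add_mul_div_left _ _ two_pos]
  ring

lemma even_mul_sub_one_div_two_add_self_iff (N : ℕ) :
    Even (N * (N - 1) / 2 + N) ↔ N % 4 = 0 ∨ N % 4 = 3 := by
  induction N using Nat.strong_induction_on with
  | _ N ih =>
    rcases lt_or_ge N 4 with hN | hN
    · interval_cases N <;> decide
    · obtain ⟨M, rfl⟩ := Nat.exists_eq_add_of_le' hN
      rw [mul_sub_one_div_two_add_self_add_four, Nat.even_add, ih M (by omega)]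
      simp only [even_two_mul, iff_true]
      omega

theorem padicValNat_factorial_eq_one {p N : ℕ} [Fact p.Prime] (hpN : p ≤ N) (hNp : N < 2 * p) :
    padicValNat p N ! = 1 := by
  have hp := (Fact.out : p.Prime).two_le
  have hlog : Nat.log p N < 2 := Nat.log_lt_of_lt_pow (by omega) (by nlinarith)
  rw [padicValNat_factorial hlog]
  simp only [Ico_succ_singleton, Finset.sum_singleton, pow_one]
  exact Nat.div_eq_of_lt_le (by omega) (by omega)

theorem exists_prime_padicValNat_factorial_eq_one {N : ℕ} (hN : 2 ≤ N) :
    ∃ p, p.Prime ∧ padicValNat p N ! = 1 := by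
  obtain ⟨p, hp, hlt, hle⟩ := Nat.exists_prime_lt_and_le_two_mul (N / 2) (by omega)
  have := Fact.mk hp
  exact ⟨p, hp, padicValNat_factorial_eq_one (by omega) (by omega)⟩

theorem even_padicValRat_of_isSquare (p : ℕ) [Fact p.Prime] {x : ℚ} (hx : IsSquare x) :
    Even (padicValRat p x) := by
  obtain ⟨r, rfl⟩ := hx
  rcases eq_or_ne r 0 with rfl | hr
  · simp
  · rw [padicValRat.mul hr hr]
    exact ⟨_, rfl⟩

theorem not_isSquare_factorial_pow {N k : ℕ} (hN : 2 ≤ N) (hk : Odd k) :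
    ¬ IsSquare ((N ! : ℚ) ^ k) := by
  obtain ⟨p, hp, hval⟩ := exists_prime_padicValNat_factorial_eq_one hN
  have := Fact.mk hp
  intro hsq
  have heven := even_padicValRat_of_isSquare p hsq
  rw [padicValRat.pow, padicValRat.of_nat, hval] at heven
  simp only [cast_one, mul_one, Int.even_coe_nat] at heven
  exact Nat.not_even_iff_odd.2 hk heven

theorem isSquare_neg_one_pow_mul_iff {R : Type*} [Field R] [LinearOrder R]
    [IsStrictOrderedRing R] {x : R} (hx : 0 < x) (e : ℕ) :
    IsSquare ((-1) ^ e * x) ↔ Even e ∧ IsSquare x := by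
  rcases Nat.even_or_odd e with he | he
  · simp [he, he.neg_one_pow]
  · simp only [he.neg_one_pow, Nat.not_even_iff_odd.2 he, false_and, iff_false, neg_one_mul]
    exact fun h => (neg_neg_of_pos hx).not_ge h.nonneg

theorem stmt_9_general (N : ℕ) :
    (∃ q : ℚ, ((-1) ^ (N * (N - 1) / 2 + N) * (N.factorial : ℚ) ^ N) = q ^ 2)
      ↔ 4 ∣ N := by
  rw [← isSquare_iff_exists_sq, isSquare_neg_one_pow_mul_iff (by positivity),
    even_mul_sub_one_div_two_add_self_iff]
  constructor
  · rintro ⟨h0 | h3, hsq⟩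
    · exact Nat.dvd_of_mod_eq_zero h0
    · exact absurd hsq (not_isSquare_factorial_pow (by omega) (Nat.odd_iff.2 (by omega)))
  · rintro ⟨m, rfl⟩
    exact ⟨Or.inl (by omega), (show Even (4 * m) from ⟨2 * m, by ring⟩).isSquare_pow _⟩

/-- For a positive integer `N`, the integer `(-1)^{N(N-1)/2 + N} · (N!)^N` is
the square of a rational number if and only if `4 ∣ N`. -/
theorem stmt_9 (N : ℕ) (hN : 1 ≤ N) :
    (∃ q : ℚ, ((-1) ^ (N * (N - 1) / 2 + N) * (N.factorial : ℚ) ^ N) = q ^ 2)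
      ↔ 4 ∣ N :=
  stmt_9_general N
end

section
/- If k ≥ 1 is an integer such that 4k − 1 is prime, then the Galois group of the truncated exponential polynomial P_{4k}(x) = Σ_{n=0}^{4k} x^n/n! is a subgroup of the alternating group A_{4k}. -/
open Polynomial

/-- `Ppoly N = ∑_{n=0}^{N} xⁿ/n!`, the truncated exponential over `ℚ`. -/
noncomputable def Ppoly (N : ℕ) : Polynomial ℚ :=
  ∑ n ∈ Finset.range (N + 1), C ((n.factorial : ℚ)⁻¹) * X ^ n

lemma deriv_Ppoly (N : ℕ) : derivative (Ppoly (N + 1)) = Ppoly N := by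
  unfold Ppoly
  rw [derivative_sum, Finset.sum_range_succ']
  simp only [derivative_C_mul, derivative_X_pow]
  rw [Nat.cast_zero, C_0, zero_mul, mul_zero, add_zero]
  refine Finset.sum_congr rfl fun m _ => ?_
  rw [Nat.add_sub_cancel, Nat.factorial_succ, ← mul_assoc, ← C_mul]
  congr 2
  push_cast
  rw [mul_inv]
  field_simp

lemma eval_zero_Ppoly (N : ℕ) : eval 0 (Ppoly N) = 1 := by
  unfold Ppoly
  rw [eval_finset_sum, Finset.sum_eq_single 0]
  · simp
  · intro b _ hb; simp [zero_pow hb]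
  · simp

lemma Ppoly_succ (N : ℕ) :
    Ppoly (N + 1) = Ppoly N + C (((N+1).factorial : ℚ)⁻¹) * X ^ (N+1) := by
  unfold Ppoly; rw [Finset.sum_range_succ]

lemma key_rational {K : Type*} [Field K] [Algebra ℚ K] (k n : ℕ) (hk : 1 ≤ k)
    (hn : n = 4 * k) (r : Fin n → K)
    (hfac : (Ppoly n).map (algebraMap ℚ K)
      = C ((n.factorial : K))⁻¹ * ∏ i, (X - C (r i))) :
    ∃ q : ℚ, (Matrix.vandermonde r).det = algebraMap ℚ K q := by
  haveI : CharZero K := charZero_of_injective_algebraMap (algebraMap ℚ K).injective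
  have hc0 : ((n.factorial : K)) ≠ 0 := Nat.cast_ne_zero.2 n.factorial_ne_zero
  set f : K[X] := ∏ i, (X - C (r i)) with hf
  -- every r i is a root of the mapped polynomial
  have hroot : ∀ i, eval (r i) ((Ppoly n).map (algebraMap ℚ K)) = 0 := by
    intro i
    rw [hfac, eval_mul, eval_C, eval_prod]
    rw [Finset.prod_eq_zero (Finset.mem_univ i) (by simp)]
    ring
  -- derivative of the mapped polynomial
  obtain ⟨m, hm⟩ : ∃ m, n = m + 1 := ⟨n - 1, by omega⟩
  have hsplit : (Ppoly n).map (algebraMap ℚ K)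
      = (Ppoly m).map (algebraMap ℚ K) + C ((n.factorial : K))⁻¹ * X ^ n := by
    rw [hm, Ppoly_succ, Polynomial.map_add, Polynomial.map_mul, Polynomial.map_pow,
      map_X, map_C, map_inv₀, map_natCast]
  have hder : derivative ((Ppoly n).map (algebraMap ℚ K))
      = (Ppoly n).map (algebraMap ℚ K) - C ((n.factorial : K))⁻¹ * X ^ n := by
    conv_lhs => rw [hm]
    rw [derivative_map, deriv_Ppoly, hsplit]
    ring
  -- eval of derivative of f at r i, via the polynomial identity
  have hdf : ∀ i, eval (r i) (derivative f) = -(r i) ^ n := by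
    intro i
    have h1 : derivative ((Ppoly n).map (algebraMap ℚ K))
        = C ((n.factorial : K))⁻¹ * derivative f := by
      rw [hfac, derivative_mul, derivative_C, zero_mul, zero_add]
    have h2 := congrArg (eval (r i)) h1
    rw [hder] at h2
    simp only [eval_sub, eval_mul, eval_C, eval_pow, eval_X, hroot i, zero_sub] at h2
    have h3 : ((n.factorial : K))⁻¹ * (-(r i ^ n))
        = ((n.factorial : K))⁻¹ * eval (r i) (derivative f) := by linear_combination h2
    exact (mul_left_cancel₀ (inv_ne_zero hc0) h3).symm
  -- eval of derivative of f at r i, via the product formula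
  have hdf2 : ∀ i, eval (r i) (derivative f)
      = ∏ j ∈ Finset.univ.erase i, (r i - r j) := by
    intro i
    have hs : f = (X - C (r i)) * ∏ j ∈ Finset.univ.erase i, (X - C (r j)) :=
      (Finset.mul_prod_erase _ _ (Finset.mem_univ i)).symm
    rw [hs, derivative_mul, derivative_sub, derivative_X, derivative_C, sub_zero, one_mul]
    simp [eval_prod]
  -- product of all roots equals n!
  have hprodr : ∏ i, r i = ((n.factorial : K)) := by
    have h0 := congrArg (eval 0) hfac
    rw [eval_map, eval₂_at_zero, coeff_zero_eq_eval_zero, eval_zero_Ppoly, map_one,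
      eval_mul, eval_C, eval_prod] at h0
    simp only [eval_sub, eval_X, eval_C, zero_sub] at h0
    have hneg : ∏ i : Fin n, -r i = (-1 : K) ^ n * ∏ i, r i := by
      calc ∏ i : Fin n, -r i = ∏ i : Fin n, ((-1) * r i) :=
            Finset.prod_congr rfl fun i _ => by ring
        _ = (∏ _i : Fin n, (-1 : K)) * ∏ i, r i := Finset.prod_mul_distrib
        _ = (-1 : K) ^ n * ∏ i, r i := by
            rw [Finset.prod_const, Finset.card_univ, Fintype.card_fin]
    rw [hneg, (Even.neg_one_pow ⟨2 * k, by omega⟩ : (-1:K)^n = 1), one_mul] at h0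
    field_simp at h0
    exact h0.symm
  -- the discriminant computation
  set d : K := (Matrix.vandermonde r).det with hd
  have hV : d = ∏ i, ∏ j ∈ Finset.Ioi i, (r j - r i) := Matrix.det_vandermonde r
  have hoff := Finset.prod_prod_Ioi_mul_eq_prod_prod_off_diag (fun i j => r j - r i)
  -- LHS of hoff equals (∏∏ -1) * d^2
  have hA : ∏ i, ∏ j ∈ Finset.Ioi i, ((r i - r j) * (r j - r i))
      = (∏ i : Fin n, ∏ _j ∈ Finset.Ioi i, (-1 : K)) * (d * d) := by
    rw [hV, ← Finset.prod_mul_distrib, ← Finset.prod_mul_distrib]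
    refine Finset.prod_congr rfl fun i _ => ?_
    rw [← Finset.prod_mul_distrib, ← Finset.prod_mul_distrib]
    exact Finset.prod_congr rfl fun j _ => by ring
  have hsign : (∏ i : Fin n, ∏ _j ∈ Finset.Ioi i, (-1 : K)) = 1 := by
    simp only [Finset.prod_const]
    rw [Finset.prod_pow_eq_pow_sum]
    apply Even.neg_one_pow
    have hcard : ∀ i : Fin n, (Finset.Ioi i).card = n - 1 - (i : ℕ) := fun i => Fin.card_Ioi i
    have e1 : ∑ i : Fin n, (Finset.Ioi i).card = ∑ i ∈ Finset.range n, (n - 1 - i) := by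
      rw [← Fin.sum_univ_eq_sum_range]
      exact Finset.sum_congr rfl fun i _ => hcard i
    have e2 : ∑ i ∈ Finset.range n, (n - 1 - i) = ∑ i ∈ Finset.range n, i :=
      Finset.sum_range_reflect (fun i => i) n
    have e3 := Finset.sum_range_id_mul_two n
    obtain ⟨t, ht⟩ : ∃ t, n - 1 = t := ⟨_, rfl⟩
    have e4 : n * (n - 1) = k * t * 4 := by rw [ht, hn]; ring
    obtain ⟨u, hu⟩ : ∃ u, u = k * t := ⟨_, rfl⟩
    rw [← hu] at e4
    exact ⟨u, by omega⟩
  -- d^2 = (n!)^n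
  have h45 : ∏ i, ∏ j ∈ Finset.Ioi i, ((r i - r j) * (r j - r i))
      = ∏ i : Fin n, (-(r i) ^ n) := by
    rw [Finset.prod_prod_Ioi_mul_eq_prod_prod_off_diag fun i j => r j - r i]
    refine Finset.prod_congr rfl fun i _ => ?_
    have := (hdf2 i).symm.trans (hdf i)
    convert this using 2
    ext j; simp
  have h6 : ∏ i : Fin n, (-(r i) ^ n) = (-1 : K) ^ n * (∏ i, r i) ^ n := by
    calc ∏ i : Fin n, (-(r i) ^ n) = ∏ i : Fin n, ((-1) * (r i) ^ n) :=
          Finset.prod_congr rfl fun i _ => by ring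
      _ = (∏ _i : Fin n, (-1 : K)) * ∏ i, (r i) ^ n := Finset.prod_mul_distrib
      _ = (-1 : K) ^ n * (∏ i, r i) ^ n := by
          rw [Finset.prod_const, Finset.card_univ, Fintype.card_fin, Finset.prod_pow]
  have hsq : d * d = ((n.factorial : K)) ^ n := by
    have hchain := (hA.symm.trans h45).trans h6
    rw [hsign, one_mul, hprodr, (Even.neg_one_pow ⟨2 * k, by omega⟩ : (-1:K)^n = 1),
      one_mul] at hchain
    exact hchain
  have ha : ((n.factorial : K)) ^ (2*k) * ((n.factorial : K)) ^ (2*k)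
      = ((n.factorial : K)) ^ n := by rw [← pow_add]; congr 1; omega
  have hz : (d - ((n.factorial : K)) ^ (2*k)) * (d + ((n.factorial : K)) ^ (2*k)) = 0 := by
    linear_combination hsq - ha
  rcases mul_eq_zero.1 hz with h | h
  · exact ⟨(n.factorial : ℚ) ^ (2*k), by rw [map_pow, map_natCast]; linear_combination h⟩
  · exact ⟨-((n.factorial : ℚ) ^ (2*k)), by
      rw [map_neg, map_pow, map_natCast]; linear_combination h⟩

/-- If `k ≥ 1` and `4k - 1` is prime, then the Galois group of the truncated
exponential `P_{4k}` is a subgroup of the alternating group `A_{4k}`: every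
Galois automorphism induces an even permutation of the roots. -/
theorem stmt_12 (k : ℕ) (hk : 1 ≤ k) (hp : (4 * k - 1).Prime)
    (r : Fin (4 * k) → (Ppoly (4 * k)).SplittingField)
    (hinj : Function.Injective r)
    (hfac : (Ppoly (4 * k)).map (algebraMap ℚ (Ppoly (4 * k)).SplittingField)
      = C (((4 * k).factorial : (Ppoly (4 * k)).SplittingField))⁻¹ * ∏ i, (X - C (r i)))
    (π : ((Ppoly (4 * k)).SplittingField ≃ₐ[ℚ] (Ppoly (4 * k)).SplittingField)
      → Equiv.Perm (Fin (4 * k)))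
    (hπ : ∀ σ i, σ (r i) = r (π σ i)) :
    ∀ σ, Equiv.Perm.sign (π σ) = 1 := by
  intro σ
  obtain ⟨q, hq⟩ := key_rational k (4 * k) hk rfl r hfac
  have hd0 : (Matrix.vandermonde r).det ≠ 0 :=
    Matrix.det_vandermonde_ne_zero_iff.2 hinj
  have hσd : σ (Matrix.vandermonde r).det = (Matrix.vandermonde r).det := by
    rw [hq]; exact σ.commutes q
  have h2 : (Matrix.vandermonde r).map σ = (Matrix.vandermonde r).submatrix (π σ) id := by
    ext i j
    simp [Matrix.vandermonde, Matrix.map_apply, Matrix.submatrix_apply, map_pow, hπ σ i]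
  have hmapdet : σ (Matrix.vandermonde r).det
      = (Equiv.Perm.sign (π σ) : ℤ) * (Matrix.vandermonde r).det := by
    rw [AlgEquiv.map_det, AlgEquiv.mapMatrix_apply, h2, Matrix.det_permute]
  rcases Int.units_eq_one_or (Equiv.Perm.sign (π σ)) with h | h
  · exact h
  · exfalso
    rw [h, hσd] at hmapdet
    simp only [Units.val_neg, Units.val_one, Int.cast_neg, Int.cast_one, neg_mul, one_mul]
      at hmapdet
    haveI : CharZero (Ppoly (4 * k)).SplittingField :=
      charZero_of_injective_algebraMap
        (algebraMap ℚ (Ppoly (4 * k)).SplittingField).injective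
    have h20 : (2 : (Ppoly (4 * k)).SplittingField) * (Matrix.vandermonde r).det = 0 := by
      linear_combination hmapdet
    exact hd0 ((mul_eq_zero.1 h20).resolve_left two_ne_zero)
end
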